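/- Let T > 0, let F assign continuously to each t ∈ [0,T] real values F(t)(i,j) at interior points, and let u₀ be a grid function vanishing on the boundary. For each continuous λ : [0,T] → ℝ^{N−1} with sup_{t,j} |λ_j(t)| < 1/2, let u_λ : [0,T] → (grid functions vanishing on the boundary) be the unique C¹ solution of ∂_t u_λ(t)(i,j) + (A(λ(t)) u_λ(t))(i,j) = F(t)(i,j) at interior points with u_λ(0) = u₀. Then the map Λ_h : λ ↦ u_λ(T), from the open ball of radius 1/2 in the space C([0,T], ℝ^{N−1}) with the supremum norm to the (finite-dimensional) space of interior grid values, is Fréchet differentiable at 0. -/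

import Mathlib

/-!
On interior values the scheme is a linear ODE `x' = f - B(λ(t)) x` in a finite-dimensional
space, and `B` is smooth near `0`: `B(w) = B(0) + C w + O(‖w‖²)` with `C` linear, since only
the coefficients `2(1 + 1/(1+λ))` and `2/(2+λ)` of the first row depend on `λ`. Grönwall's
inequality makes `λ ↦ u_λ` Lipschitz at `0`. Comparing `u_λ` with `u_0` through the propagator
`exp((s - T) B(0))` (Duhamel's formula) then shows that `u_λ(T) - u_0(T)` differs from the
bounded linear map `λ ↦ -∫₀ᵀ exp((s - T) B(0)) C(λ(s)) u_0(s) ds` by `O(‖λ‖²)`.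
-/

open Set

/-- The point `(i,j)` is an interior node of the grid `Ω_h`. -/
def isInterior (M N : ℤ) (i j : ℤ) : Prop :=
  1 ≤ i ∧ i ≤ M - 1 ∧ 1 ≤ j ∧ j ≤ N - 1

/-- The point `(i,j)` belongs to the grid `Ω_h`. -/
def onGrid (M N : ℤ) (i j : ℤ) : Prop :=
  0 ≤ i ∧ i ≤ M ∧ 0 ≤ j ∧ j ≤ N

/-- The point `(i,j)` belongs to the discrete boundary `Γ⁰` of `Ω_h`. -/
def onBoundary (M N : ℤ) (i j : ℤ) : Prop :=
  onGrid M N i j ∧ ¬ isInterior M N i j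

/-- The discrete Dirichlet Laplacian `(A X)(i,j)`. -/
noncomputable def discLap (h : ℝ) (X : ℤ → ℤ → ℝ) (i j : ℤ) : ℝ :=
  (1 / h ^ 2) * (4 * X i j - X (i + 1) j - X (i - 1) j - X i (j + 1) - X i (j - 1))

/-- The perturbed operator `A(λ)`. -/
noncomputable def pertOp (h : ℝ) (lam : ℤ → ℝ) (X : ℤ → ℤ → ℝ) (i j : ℤ) : ℝ :=
  if i = 1 then
    (1 / h ^ 2) * (2 * (1 + 1 / (1 + lam j)) * X 1 j - (2 / (2 + lam j)) * X 2 j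
      - X 1 (j + 1) - X 1 (j - 1))
  else discLap h X i j

/-- Reindex a vector of `ℝ^{N−1}` (entries `v 0, …, v (N-2)` corresponding to
`λ_1, …, λ_{N−1}`) as a `ℤ`-indexed family, vanishing outside `1 ≤ j ≤ N−1`. -/
noncomputable def lamOfFin (N : ℕ) (v : Fin (N - 1) → ℝ) : ℤ → ℝ := fun j =>
  if hj : 0 ≤ j - 1 ∧ (j - 1).toNat < N - 1 then v ⟨(j - 1).toNat, hj.2⟩ else 0

open Asymptotics NormedSpace

section Calculus

variable {E F : Type*} [NormedAddCommGroup E] [NormedSpace ℝ E]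
  [NormedAddCommGroup F] [NormedSpace ℝ F]

theorem hasFDerivAt_of_norm_sub_le_sq {g : E → F} {L : E →L[ℝ] F} {x : E} {r c : ℝ}
    (hr : 0 < r) (hg : ∀ y, ‖y - x‖ < r → ‖g y - g x - L (y - x)‖ ≤ c * ‖y - x‖ ^ 2) :
    HasFDerivAt g L x := by
  rw [hasFDerivAt_iff_isLittleO_nhds_zero]
  refine (IsBigO.of_bound c ?_).trans_isLittleO (isLittleO_norm_pow_id one_lt_two)
  filter_upwards [Metric.ball_mem_nhds 0 hr] with y hy
  simpa using hg (x + y) (by simpa using hy)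

theorem gronwallBound_zero_eq_mul (K ε t : ℝ) :
    gronwallBound 0 K ε t = gronwallBound 0 K 1 t * ε := by
  unfold gronwallBound
  split_ifs <;> ring

end Calculus

section LinearODE

variable {V : Type*} [NormedAddCommGroup V] [NormedSpace ℝ V]

theorem norm_sub_le_gronwallBound_of_linearODE {x y f : ℝ → V} {A : ℝ → V →L[ℝ] V}
    {A₀ : V →L[ℝ] V} {T K δ M₀ : ℝ}
    (hx : ∀ t ∈ Icc 0 T, HasDerivWithinAt x (f t - A t (x t)) (Icc 0 T) t)
    (hy : ∀ t ∈ Icc 0 T, HasDerivWithinAt y (f t - A₀ (y t)) (Icc 0 T) t)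
    (h₀ : x 0 = y 0) (hA : ∀ t ∈ Icc 0 T, ‖A t‖ ≤ K) (hAA₀ : ∀ t ∈ Icc 0 T, ‖A t - A₀‖ ≤ δ)
    (hyM : ∀ t ∈ Icc 0 T, ‖y t‖ ≤ M₀) :
    ∀ t ∈ Icc 0 T, ‖x t - y t‖ ≤ gronwallBound 0 K 1 T * (δ * M₀) := by
  intro t ht
  have hδ : 0 ≤ δ := (norm_nonneg _).trans (hAA₀ t ht)
  have hM₀ : 0 ≤ M₀ := (norm_nonneg _).trans (hyM t ht)
  have hK : 0 ≤ K := (norm_nonneg _).trans (hA t ht)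
  have hdiff : ∀ s ∈ Icc 0 T, HasDerivWithinAt (fun s => x s - y s)
      (-A s (x s - y s) - (A s - A₀) (y s)) (Icc 0 T) s := by
    intro s hs
    refine ((hx s hs).sub (hy s hs)).congr_deriv ?_
    simp only [map_sub, sub_apply]
    abel
  have hbound : ∀ s ∈ Ico 0 T,
      ‖-A s (x s - y s) - (A s - A₀) (y s)‖ ≤ K * ‖x s - y s‖ + δ * M₀ := by
    intro s hs
    have hs' := Ico_subset_Icc_self hs
    calc ‖-A s (x s - y s) - (A s - A₀) (y s)‖
        ≤ ‖A s (x s - y s)‖ + ‖(A s - A₀) (y s)‖ := by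
          simpa only [norm_neg] using norm_sub_le (-A s (x s - y s)) ((A s - A₀) (y s))
      _ ≤ K * ‖x s - y s‖ + δ * M₀ := by
          gcongr
          · exact (A s).le_of_opNorm_le (hA s hs') _
          · exact (A s - A₀).le_of_opNorm_le (hAA₀ s hs') _ |>.trans
              (mul_le_mul_of_nonneg_left (hyM s hs') hδ)
  have hgron := norm_le_gronwallBound_of_norm_deriv_right_le (δ := 0)
    (fun s hs => (hdiff s hs).continuousWithinAt)
    (fun s hs => (hdiff s (Ico_subset_Icc_self hs)).mono_of_mem_nhdsWithin
      (Icc_mem_nhdsGE_of_mem hs)) (by simp [h₀]) hbound t ht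
  calc ‖x t - y t‖ ≤ gronwallBound 0 K (δ * M₀) (t - 0) := hgron
    _ = gronwallBound 0 K 1 t * (δ * M₀) := by rw [sub_zero, gronwallBound_zero_eq_mul]
    _ ≤ gronwallBound 0 K 1 T * (δ * M₀) :=
        mul_le_mul_of_nonneg_right (gronwallBound_mono le_rfl zero_le_one hK ht.2)
          (mul_nonneg hδ hM₀)

variable [CompleteSpace V]

theorem norm_sub_add_duhamel_integral_le {x y f : ℝ → V} {A D : ℝ → V →L[ℝ] V} {A₀ : V →L[ℝ] V}
    {T CE ε : ℝ} (hT : 0 ≤ T)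
    (hx : ∀ t ∈ Icc 0 T, HasDerivWithinAt x (f t - A t (x t)) (Icc 0 T) t)
    (hy : ∀ t ∈ Icc 0 T, HasDerivWithinAt y (f t - A₀ (y t)) (Icc 0 T) t)
    (h₀ : x 0 = y 0) (hDy : ContinuousOn (fun s => D s (y s)) (Icc 0 T))
    (hE : ∀ s ∈ Icc 0 T, ‖exp ((s - T) • A₀)‖ ≤ CE)
    (hε : ∀ t ∈ Icc 0 T, ‖(A t - A₀ - D t) (x t) + D t (x t - y t)‖ ≤ ε) :
    ‖x T - y T + ∫ s in 0..T, exp ((s - T) • A₀) (D s (y s))‖ ≤ CE * ε * T := by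
  set E : ℝ → V →L[ℝ] V := fun s => exp ((s - T) • A₀)
  have hE' : ∀ s, HasDerivAt E (E s * A₀) s := fun s =>
    (hasDerivAt_exp_smul_const A₀ (s - T)).comp_sub_const s T
  set ψ : ℝ → V := fun s => E s (D s (y s))
  have hψ : ContinuousOn ψ (Icc 0 T) :=
    (continuous_iff_continuousAt.2 fun s => (hE' s).continuousAt).continuousOn.clm_apply hDy
  -- extend `ψ` continuously to `ℝ` so that the integral has a derivative everywhere
  set ψ' : ℝ → V := IccExtend hT ((Icc 0 T).domRestrict ψ)
  have hψ' : Continuous ψ' := hψ.domRestrict.Icc_extend'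
  have hψψ' : ∀ s ∈ Icc 0 T, ψ' s = ψ s := fun s hs => IccExtend_of_mem hT _ hs
  set ρ : ℝ → V := fun t => E t (x t - y t) + ∫ s in 0..t, ψ' s
  have hρ : ∀ t ∈ Icc 0 T, HasDerivWithinAt ρ
      (E t (-((A t - A₀ - D t) (x t) + D t (x t - y t)))) (Icc 0 T) t := by
    intro t ht
    refine (((hE' t).hasDerivWithinAt.clm_apply ((hx t ht).sub (hy t ht))).add
      (hψ'.integral_hasStrictDerivAt 0 t).hasDerivAt.hasDerivWithinAt).congr_deriv ?_
    rw [hψψ' t ht]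
    simp only [ψ, mul_apply_eq_comp, ← map_add]
    congr 1
    simp only [Pi.sub_apply, map_sub, sub_apply]
    abel
  have hCE : 0 ≤ CE := (norm_nonneg _).trans (hE 0 ⟨le_rfl, hT⟩)
  have hρ' : ∀ t ∈ Ico 0 T, ‖E t (-((A t - A₀ - D t) (x t) + D t (x t - y t)))‖ ≤ CE * ε := by
    intro t ht
    have ht' := Ico_subset_Icc_self ht
    calc ‖E t (-((A t - A₀ - D t) (x t) + D t (x t - y t)))‖
        ≤ ‖E t‖ * ‖-((A t - A₀ - D t) (x t) + D t (x t - y t))‖ := (E t).le_opNorm _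
      _ ≤ CE * ε := by
          rw [norm_neg]
          exact mul_le_mul (hE t ht') (hε t ht') (norm_nonneg _) hCE
  have hmvt := norm_image_sub_le_of_norm_deriv_le_segment' hρ hρ' T ⟨hT, le_rfl⟩
  have hρT : ρ T = x T - y T + ∫ s in 0..T, ψ s := by
    simp only [ρ, E, sub_self, zero_smul, exp_zero, one_apply_eq_self]
    congr 1
    exact intervalIntegral.integral_congr fun s hs => hψψ' s (by rwa [uIcc_of_le hT] at hs)
  have hρ0 : ρ 0 = 0 := by simp [ρ, h₀]
  rwa [hρT, hρ0, sub_zero, sub_zero] at hmvt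

end LinearODE

section EndpointMap

variable {P V : Type*} [NormedAddCommGroup P] [NormedSpace ℝ P]
  [NormedAddCommGroup V] [NormedSpace ℝ V]

theorem exists_clm_eq_intervalIntegral [CompleteSpace V] {T : ℝ} (hT : 0 ≤ T)
    {G : ℝ → P →L[ℝ] V} (hG : ContinuousOn G (Icc 0 T)) :
    ∃ L : C(Icc 0 T, P) →L[ℝ] V, ∀ μ, L μ = ∫ s in 0..T, G s (IccExtend hT μ s) := by
  obtain ⟨K, hK⟩ := isCompact_Icc.exists_bound_of_continuousOn hG
  have hint : ∀ μ : C(Icc 0 T, P),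
      IntervalIntegrable (fun s => G s (IccExtend hT μ s)) MeasureTheory.volume 0 T :=
    fun μ => (hG.clm_apply μ.continuous.Icc_extend'.continuousOn).intervalIntegrable_of_Icc hT
  let L : C(Icc 0 T, P) →ₗ[ℝ] V :=
    { toFun := fun μ => ∫ s in 0..T, G s (IccExtend hT μ s)
      map_add' := fun μ ν => by
        simp only [← intervalIntegral.integral_add (hint μ) (hint ν), ← map_add]
        rfl
      map_smul' := fun a μ => by
        simp only [RingHom.id_apply, ← intervalIntegral.integral_smul, ← map_smul]
        rfl }
  refine ⟨L.mkContinuous (K * T) fun μ => ?_, fun μ => rfl⟩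
  calc ‖L μ‖ ≤ K * ‖μ‖ * |T - 0| :=
        intervalIntegral.norm_integral_le_of_norm_le_const fun s hs => ?_
    _ = K * T * ‖μ‖ := by rw [sub_zero, abs_of_nonneg hT]; ring
  rw [uIoc_of_le hT] at hs
  have hKs := hK s (Ioc_subset_Icc_self hs)
  exact (G s).le_opNorm _ |>.trans
    (mul_le_mul hKs (μ.norm_coe_le_norm _) (norm_nonneg _) ((norm_nonneg _).trans hKs))

variable {B : P → V →L[ℝ] V} {C : P →L[ℝ] V →L[ℝ] V} {r c T : ℝ} {f : ℝ → V}
  {X : C(Icc 0 T, P) → ℝ → V}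

theorem norm_sub_le_of_norm_sub_sub_le_sq (hc : 0 ≤ c)
    (hBC : ∀ w, ‖w‖ < r → ‖B w - B 0 - C w‖ ≤ c * ‖w‖ ^ 2) {w : P} (hw : ‖w‖ < r) :
    ‖B w - B 0‖ ≤ (‖C‖ + c * r) * ‖w‖ :=
  calc ‖B w - B 0‖ = ‖(B w - B 0 - C w) + C w‖ := by rw [sub_add_cancel]
    _ ≤ c * ‖w‖ ^ 2 + ‖C‖ * ‖w‖ := norm_add_le_of_le (hBC w hw) (C.le_opNorm w)
    _ ≤ (‖C‖ + c * r) * ‖w‖ := by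
        nlinarith [mul_nonneg (mul_nonneg hc (norm_nonneg w)) (sub_nonneg.2 hw.le)]

theorem exists_norm_sub_le_mul_norm (hr : 0 < r) (hT : 0 ≤ T) (hc : 0 ≤ c)
    (hBC : ∀ w, ‖w‖ < r → ‖B w - B 0 - C w‖ ≤ c * ‖w‖ ^ 2)
    (hX : ∀ lam : C(Icc 0 T, P), ‖lam‖ < r → ∀ t ∈ Icc 0 T,
      HasDerivWithinAt (X lam) (f t - B (IccExtend hT lam t) (X lam t)) (Icc 0 T) t)
    (hX₀ : ∀ lam : C(Icc 0 T, P), ‖lam‖ < r → X lam 0 = X 0 0) :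
    ∃ C₁, 0 ≤ C₁ ∧ ∀ lam : C(Icc 0 T, P), ‖lam‖ < r →
      ∀ t ∈ Icc 0 T, ‖X lam t - X 0 t‖ ≤ C₁ * ‖lam‖ := by
  have h0 : ‖(0 : C(Icc 0 T, P))‖ < r := by simpa using hr
  have hy : ∀ t ∈ Icc 0 T, HasDerivWithinAt (X 0) (f t - B 0 (X 0 t)) (Icc 0 T) t := by
    simpa [IccExtend_apply] using hX 0 h0
  obtain ⟨M₀, hM₀⟩ :=
    isCompact_Icc.exists_bound_of_continuousOn fun t ht => (hy t ht).continuousWithinAt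
  have hM₀0 : 0 ≤ M₀ := (norm_nonneg _).trans (hM₀ 0 ⟨le_rfl, hT⟩)
  set K := ‖C‖ + c * r
  have hK : 0 ≤ K := by positivity
  refine ⟨gronwallBound 0 (‖B 0‖ + K * r) 1 T * (K * M₀), ?_, fun lam hlam => ?_⟩
  · exact mul_nonneg (gronwallBound_mono le_rfl zero_le_one (by positivity) hT |>.trans' 
      (by simp [gronwallBound_x0])) (by positivity)
  have hlam_t : ∀ t, ‖IccExtend hT lam t‖ ≤ ‖lam‖ := fun t => lam.norm_coe_le_norm _
  have hlip : ∀ t, ‖B (IccExtend hT lam t) - B 0‖ ≤ K * ‖lam‖ := fun t =>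
    (norm_sub_le_of_norm_sub_sub_le_sq hc hBC ((hlam_t t).trans_lt hlam)).trans
      (mul_le_mul_of_nonneg_left (hlam_t t) hK)
  have hbound : ∀ t, ‖B (IccExtend hT lam t)‖ ≤ ‖B 0‖ + K * r := fun t =>
    calc ‖B (IccExtend hT lam t)‖ = ‖B 0 + (B (IccExtend hT lam t) - B 0)‖ := by
          rw [add_sub_cancel]
      _ ≤ ‖B 0‖ + K * r := norm_add_le_of_le le_rfl
          ((hlip t).trans (mul_le_mul_of_nonneg_left hlam.le hK))
  intro t ht
  calc ‖X lam t - X 0 t‖ ≤ gronwallBound 0 (‖B 0‖ + K * r) 1 T * (K * ‖lam‖ * M₀) :=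
        norm_sub_le_gronwallBound_of_linearODE (hX lam hlam) hy (hX₀ lam hlam)
          (fun t _ => hbound t) (fun t _ => hlip t) hM₀ t ht
    _ = gronwallBound 0 (‖B 0‖ + K * r) 1 T * (K * M₀) * ‖lam‖ := by ring

theorem norm_sub_sub_apply_add_apply_le (hBC : ∀ w, ‖w‖ < r → ‖B w - B 0 - C w‖ ≤ c * ‖w‖ ^ 2)
    {w : P} (hw : ‖w‖ < r) (x y : V) :
    ‖(B w - B 0 - C w) x + C w (x - y)‖ ≤ c * ‖w‖ ^ 2 * ‖x‖ + ‖C‖ * ‖w‖ * ‖x - y‖ :=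
  norm_add_le_of_le ((B w - B 0 - C w).le_of_opNorm_le (hBC w hw) x)
    ((C w).le_opNorm _ |>.trans (mul_le_mul_of_nonneg_right (C.le_opNorm w) (norm_nonneg _)))

theorem exists_norm_endpoint_sub_sub_le_sq [CompleteSpace V] (hr : 0 < r) (hT : 0 ≤ T)
    (hc : 0 ≤ c) (hBC : ∀ w, ‖w‖ < r → ‖B w - B 0 - C w‖ ≤ c * ‖w‖ ^ 2)
    (hX : ∀ lam : C(Icc 0 T, P), ‖lam‖ < r → ∀ t ∈ Icc 0 T,
      HasDerivWithinAt (X lam) (f t - B (IccExtend hT lam t) (X lam t)) (Icc 0 T) t)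
    (hX₀ : ∀ lam : C(Icc 0 T, P), ‖lam‖ < r → X lam 0 = X 0 0) :
    ∃ (L : C(Icc 0 T, P) →L[ℝ] V) (K : ℝ), ∀ lam : C(Icc 0 T, P), ‖lam‖ < r →
      ‖X lam T - X 0 T - L lam‖ ≤ K * ‖lam‖ ^ 2 := by
  have h0 : ‖(0 : C(Icc 0 T, P))‖ < r := by simpa using hr
  have hy : ∀ t ∈ Icc 0 T, HasDerivWithinAt (X 0) (f t - B 0 (X 0 t)) (Icc 0 T) t := by
    simpa [IccExtend_apply] using hX 0 h0
  have hycont : ContinuousOn (X 0) (Icc 0 T) := fun t ht => (hy t ht).continuousWithinAt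
  obtain ⟨M₀, hM₀⟩ := isCompact_Icc.exists_bound_of_continuousOn hycont
  obtain ⟨C₁, hC₁, hlip⟩ := exists_norm_sub_le_mul_norm hr hT hc hBC hX hX₀
  set E : ℝ → V →L[ℝ] V := fun s => exp ((s - T) • B 0)
  have hE : Continuous E := continuous_iff_continuousAt.2 fun s =>
    ((hasDerivAt_exp_smul_const (B 0) (s - T)).comp_sub_const s T).continuousAt
  obtain ⟨CE, hCE⟩ := isCompact_Icc.exists_bound_of_continuousOn (s := Icc 0 T) hE.continuousOn
  obtain ⟨L, hL⟩ := exists_clm_eq_intervalIntegral hT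
    (G := fun s => -((E s).comp (C.flip (X 0 s))))
    ((hE.continuousOn.clm_comp (C.flip.continuous.comp_continuousOn hycont)).neg)
  refine ⟨L, CE * (c * (M₀ + C₁ * r) + ‖C‖ * C₁) * T, fun lam hlam => ?_⟩
  have hrem : ∀ t ∈ Icc 0 T, ‖(B (IccExtend hT lam t) - B 0 - C (IccExtend hT lam t)) (X lam t)
      + C (IccExtend hT lam t) (X lam t - X 0 t)‖
        ≤ (c * (M₀ + C₁ * r) + ‖C‖ * C₁) * ‖lam‖ ^ 2 := by
    intro t ht
    have hw : ‖IccExtend hT lam t‖ ≤ ‖lam‖ := lam.norm_coe_le_norm _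
    have hx : ‖X lam t‖ ≤ M₀ + C₁ * r :=
      calc ‖X lam t‖ = ‖X 0 t + (X lam t - X 0 t)‖ := by rw [add_sub_cancel]
        _ ≤ M₀ + C₁ * r := norm_add_le_of_le (hM₀ t ht)
            ((hlip lam hlam t ht).trans (mul_le_mul_of_nonneg_left hlam.le hC₁))
    calc _ ≤ c * ‖IccExtend hT lam t‖ ^ 2 * ‖X lam t‖
          + ‖C‖ * ‖IccExtend hT lam t‖ * ‖X lam t - X 0 t‖ :=
          norm_sub_sub_apply_add_apply_le hBC (hw.trans_lt hlam) _ _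
      _ ≤ c * ‖lam‖ ^ 2 * (M₀ + C₁ * r) + ‖C‖ * ‖lam‖ * (C₁ * ‖lam‖) := by
          gcongr
          exact hlip lam hlam t ht
      _ = _ := by ring
  have hL' : X lam T - X 0 T - L lam
      = X lam T - X 0 T + ∫ s in 0..T, E s (C (IccExtend hT lam s) (X 0 s)) := by
    simp [hL, intervalIntegral.integral_neg, sub_eq_add_neg]
  rw [hL']
  calc _ ≤ CE * ((c * (M₀ + C₁ * r) + ‖C‖ * C₁) * ‖lam‖ ^ 2) * T :=
        norm_sub_add_duhamel_integral_le hT (hX lam hlam) hy (hX₀ lam hlam)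
          ((C.continuous.comp (lam.continuous.Icc_extend')).continuousOn.clm_apply hycont)
          hCE hrem
    _ = _ := by ring

theorem differentiableAt_endpoint_of_norm_sub_sub_le_sq [CompleteSpace V]
    (C : P →L[ℝ] V →L[ℝ] V) (hr : 0 < r) (hT : 0 ≤ T)
    (hBC : ∀ w, ‖w‖ < r → ‖B w - B 0 - C w‖ ≤ c * ‖w‖ ^ 2)
    (hX : ∀ lam : C(Icc 0 T, P), ‖lam‖ < r → ∀ t (ht : t ∈ Icc 0 T),
      HasDerivWithinAt (X lam) (f t - B (lam ⟨t, ht⟩) (X lam t)) (Icc 0 T) t)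
    (hX₀ : ∀ lam : C(Icc 0 T, P), ‖lam‖ < r → X lam 0 = X 0 0) :
    DifferentiableAt ℝ (fun lam => X lam T) 0 := by
  obtain ⟨L, K, hL⟩ := exists_norm_endpoint_sub_sub_le_sq hr hT (abs_nonneg c)
    (fun w hw => (hBC w hw).trans (by gcongr; exact le_abs_self c))
    (fun lam hlam t ht => by rw [IccExtend_of_mem hT lam ht]; exact hX lam hlam t ht) hX₀
  refine (hasFDerivAt_of_norm_sub_le_sq (L := L) (c := K) hr fun lam hlam => ?_).differentiableAt
  simpa using hL lam (by simpa using hlam)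

end EndpointMap

-- Second-order Taylor bounds at `0` for the two `λ`-dependent coefficients of `pertOp`.
theorem abs_diagCoeff_sub_taylor_le {a : ℝ} (ha : |a| < 1 / 2) :
    |2 * (1 + 1 / (1 + a)) - 4 + 2 * a| ≤ 4 * a ^ 2 := by
  obtain ⟨hl, hr⟩ := abs_lt.1 ha
  have h1 : 0 < 1 + a := by linarith
  rw [show 2 * (1 + 1 / (1 + a)) - 4 + 2 * a = 2 * a ^ 2 / (1 + a) by field_simp; ring,
    abs_of_nonneg (by positivity), div_le_iff₀ h1]
  nlinarith [sq_nonneg a]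

theorem abs_nbrCoeff_sub_taylor_le {a : ℝ} (ha : |a| < 1 / 2) :
    |2 / (2 + a) - 1 + a / 2| ≤ a ^ 2 := by
  obtain ⟨hl, hr⟩ := abs_lt.1 ha
  have h1 : 0 < 2 + a := by linarith
  rw [show 2 / (2 + a) - 1 + a / 2 = a ^ 2 / (2 * (2 + a)) by field_simp; ring,
    abs_of_nonneg (by positivity), div_le_iff₀ (by positivity)]
  nlinarith [sq_nonneg a]

theorem pertOp_congr {M N : ℤ} {h : ℝ} {lam : ℤ → ℝ} {X Y : ℤ → ℤ → ℝ}
    (hXY : ∀ i j, onGrid M N i j → X i j = Y i j) {i j : ℤ} (hij : isInterior M N i j) :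
    pertOp h lam X i j = pertOp h lam Y i j := by
  obtain ⟨h1, h2, h3, h4⟩ := hij
  have e : ∀ a b, i - 1 ≤ a → a ≤ i + 1 → j - 1 ≤ b → b ≤ j + 1 → X a b = Y a b :=
    fun a b _ _ _ _ => hXY a b ⟨by omega, by omega, by omega, by omega⟩
  unfold pertOp discLap
  split_ifs with hi
  · subst hi
    rw [e 1 j, e 2 j, e 1 (j + 1), e 1 (j - 1)] <;> omega
  · rw [e i j, e (i + 1) j, e (i - 1) j, e i (j + 1), e i (j - 1)] <;> omega

theorem lamOfFin_natCast_add_one (N : ℕ) (w : Fin (N - 1) → ℝ) (j : Fin (N - 1)) :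
    lamOfFin N w ((j : ℕ) + 1) = w j := by
  rw [lamOfFin, dif_pos (by omega)]
  congr 1
  ext
  simp

noncomputable def pertOpLinearMap (h : ℝ) (lam : ℤ → ℝ) : (ℤ → ℤ → ℝ) →ₗ[ℝ] (ℤ → ℤ → ℝ) where
  toFun := pertOp h lam
  map_add' X Y := by
    ext i j
    simp only [pertOp, discLap, Pi.add_apply]
    split_ifs <;> ring
  map_smul' c X := by
    ext i j
    simp only [pertOp, discLap, Pi.smul_apply, smul_eq_mul, RingHom.id_apply]
    split_ifs <;> ring

/-- Values at the interior nodes; the index `p` stands for the node `(p.1 + 1, p.2 + 1)`. -/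
abbrev InteriorGrid (M N : ℕ) := Fin (M - 1) × Fin (N - 1) → ℝ

section Grid

variable {M N : ℕ}

def interiorValues (M N : ℕ) : (ℤ → ℤ → ℝ) →ₗ[ℝ] InteriorGrid M N where
  toFun v p := v ((p.1 : ℕ) + 1) ((p.2 : ℕ) + 1)
  map_add' _ _ := rfl
  map_smul' _ _ := rfl

noncomputable def extendByZero (M N : ℕ) : InteriorGrid M N →ₗ[ℝ] (ℤ → ℤ → ℝ) where
  toFun x i j :=
    if hij : 1 ≤ i ∧ i ≤ (M : ℤ) - 1 ∧ 1 ≤ j ∧ j ≤ (N : ℤ) - 1 then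
      x (⟨(i - 1).toNat, by omega⟩, ⟨(j - 1).toNat, by omega⟩)
    else 0
  map_add' x y := by
    ext i j
    simp only [Pi.add_apply]
    split_ifs <;> simp
  map_smul' c x := by
    ext i j
    simp only [Pi.smul_apply, RingHom.id_apply]
    split_ifs <;> simp

theorem abs_extendByZero_le (x : InteriorGrid M N) (i j : ℤ) : |extendByZero M N x i j| ≤ ‖x‖ := by
  simp only [extendByZero, LinearMap.coe_mk, AddHom.coe_mk]
  split_ifs
  · exact norm_le_pi_norm x _
  · simp

theorem extendByZero_interiorValues {v : ℤ → ℤ → ℝ}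
    (hv : ∀ i j, onBoundary M N i j → v i j = 0) {i j : ℤ} (hij : onGrid M N i j) :
    extendByZero M N (interiorValues M N v) i j = v i j := by
  simp only [extendByZero, interiorValues, LinearMap.coe_mk, AddHom.coe_mk]
  split_ifs with hint
  · congr <;> omega
  · exact (hv i j ⟨hij, fun h => hint h⟩).symm

noncomputable def gridOp (M N : ℕ) (h : ℝ) (w : Fin (N - 1) → ℝ) :
    InteriorGrid M N →L[ℝ] InteriorGrid M N :=
  LinearMap.toContinuousLinearMap
    (interiorValues M N ∘ₗ pertOpLinearMap h (lamOfFin N w) ∘ₗ extendByZero M N)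

theorem interiorValues_pertOp {h : ℝ} (w : Fin (N - 1) → ℝ) {v : ℤ → ℤ → ℝ}
    (hv : ∀ i j, onBoundary M N i j → v i j = 0) :
    interiorValues M N (pertOp h (lamOfFin N w) v) = gridOp M N h w (interiorValues M N v) := by
  ext p
  exact pertOp_congr (fun i j hij => (extendByZero_interiorValues hv hij).symm)
    ⟨by omega, by omega, by omega, by omega⟩

-- Only the row `i = 1` of `gridOp` depends on `w`, through `2(1 + 1/(1+λ))` and `2/(2+λ)`,
-- whose derivatives at `λ = 0` are `-2` and `-1/2`.
noncomputable def gridOpDeriv (M N : ℕ) (h : ℝ) :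
    (Fin (N - 1) → ℝ) →L[ℝ] InteriorGrid M N →L[ℝ] InteriorGrid M N :=
  LinearMap.toContinuousLinearMap <| LinearMap.toContinuousLinearMap.toLinearMap ∘ₗ
    LinearMap.mk₂ ℝ (fun w x p => if (p.1 : ℕ) = 0 then
        1 / h ^ 2 * w p.2
          * (extendByZero M N x 2 (p.2 + 1) / 2 - 2 * extendByZero M N x 1 (p.2 + 1))
      else 0)
      (fun _ _ _ => by ext; simp only [Pi.add_apply]; split_ifs <;> ring)
      (fun _ _ _ => by ext; simp only [Pi.smul_apply, smul_eq_mul]; split_ifs <;> ring)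
      (fun _ _ _ => by ext; simp only [Pi.add_apply, map_add]; split_ifs <;> ring)
      (fun _ _ _ => by ext; simp only [Pi.smul_apply, map_smul, smul_eq_mul]; split_ifs <;> ring)

theorem gridOp_sub_sub_gridOpDeriv_apply (h : ℝ) (w : Fin (N - 1) → ℝ) (x : InteriorGrid M N)
    (p : Fin (M - 1) × Fin (N - 1)) :
    (gridOp M N h w - gridOp M N h 0 - gridOpDeriv M N h w) x p =
      if (p.1 : ℕ) = 0 then
        1 / h ^ 2 * ((2 * (1 + 1 / (1 + w p.2)) - 4 + 2 * w p.2) * extendByZero M N x 1 (p.2 + 1)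
          - (2 / (2 + w p.2) - 1 + w p.2 / 2) * extendByZero M N x 2 (p.2 + 1))
      else 0 := by
  show pertOp h (lamOfFin N w) (extendByZero M N x) _ _
    - pertOp h (lamOfFin N 0) (extendByZero M N x) _ _ - (if (p.1 : ℕ) = 0 then _ else _) = _
  simp only [pertOp, lamOfFin_natCast_add_one, Pi.zero_apply]
  split_ifs <;> first | (exfalso; omega) | ring

theorem norm_gridOp_sub_sub_gridOpDeriv_le (h : ℝ) {w : Fin (N - 1) → ℝ} (hw : ‖w‖ < 1 / 2) :
    ‖gridOp M N h w - gridOp M N h 0 - gridOpDeriv M N h w‖ ≤ 5 / h ^ 2 * ‖w‖ ^ 2 := by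
  refine ContinuousLinearMap.opNorm_le_bound _ (by positivity) fun x => ?_
  refine (pi_norm_le_iff_of_nonneg (by positivity)).2 fun p => ?_
  rw [gridOp_sub_sub_gridOpDeriv_apply, Real.norm_eq_abs]
  split_ifs
  · have ha : |w p.2| ≤ ‖w‖ := norm_le_pi_norm w p.2
    have hdiag := abs_diagCoeff_sub_taylor_le (ha.trans_lt hw)
    have hnbr := abs_nbrCoeff_sub_taylor_le (ha.trans_lt hw)
    have hx₁ := abs_extendByZero_le x 1 (p.2 + 1)
    have hx₂ := abs_extendByZero_le x 2 (p.2 + 1)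
    calc _ = 1 / h ^ 2
          * |(2 * (1 + 1 / (1 + w p.2)) - 4 + 2 * w p.2) * extendByZero M N x 1 (p.2 + 1)
            - (2 / (2 + w p.2) - 1 + w p.2 / 2) * extendByZero M N x 2 (p.2 + 1)| := by
          rw [abs_mul, abs_of_nonneg (by positivity)]
      _ ≤ 1 / h ^ 2 * (4 * w p.2 ^ 2 * ‖x‖ + w p.2 ^ 2 * ‖x‖) := by
          gcongr
          refine (abs_sub _ _).trans (add_le_add ?_ ?_) <;> rw [abs_mul] <;> gcongr
      _ = 5 / h ^ 2 * |w p.2| ^ 2 * ‖x‖ := by rw [sq_abs]; ring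
      _ ≤ 5 / h ^ 2 * ‖w‖ ^ 2 * ‖x‖ := by gcongr
  · simp only [abs_zero]
    positivity

end Grid

theorem stmt11_general (M N : ℕ) (h : ℝ)
    (T : ℝ) (hT : 0 < T)
    (F : ℝ → ℤ → ℤ → ℝ)
    (u₀ : ℤ → ℤ → ℝ)
    (u : C(Icc (0 : ℝ) T, Fin (N - 1) → ℝ) → ℝ → ℤ → ℤ → ℝ)
    (hu : ∀ lam : C(Icc (0 : ℝ) T, Fin (N - 1) → ℝ), ‖lam‖ < 1 / 2 →
      (∀ t ∈ Icc (0 : ℝ) T, ∀ i j, onBoundary M N i j → u lam t i j = 0) ∧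
      (∀ t, ∀ ht : t ∈ Icc (0 : ℝ) T, ∀ i j, isInterior M N i j →
        HasDerivWithinAt (fun s => u lam s i j)
          (F t i j - pertOp h (lamOfFin N (lam ⟨t, ht⟩)) (u lam t) i j)
          (Icc (0 : ℝ) T) t) ∧
      u lam 0 = u₀) :
    DifferentiableAt ℝ
      (fun lam : C(Icc (0 : ℝ) T, Fin (N - 1) → ℝ) =>
        fun p : Fin (M - 1) × Fin (N - 1) =>
          u lam T (((p.1 : ℕ) : ℤ) + 1) (((p.2 : ℕ) : ℤ) + 1)) 0 := by
  refine differentiableAt_endpoint_of_norm_sub_sub_le_sq (B := gridOp M N h) (gridOpDeriv M N h)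
    one_half_pos hT.le (fun w hw => norm_gridOp_sub_sub_gridOpDeriv_le h hw)
    (f := fun t => interiorValues M N (F t)) (X := fun lam t => interiorValues M N (u lam t))
    (fun lam hlam t ht => ?_) (fun lam hlam => ?_)
  · rw [← interiorValues_pertOp _ ((hu lam hlam).1 t ht), ← map_sub]
    exact hasDerivWithinAt_pi.2 fun p =>
      (hu lam hlam).2.1 t ht _ _ ⟨by omega, by omega, by omega, by omega⟩
  · simp only [(hu lam hlam).2.2, (hu 0 (by simp)).2.2]

/-- the map `Λ_h : λ ↦ u_λ(T)` from the open ball of radius `1/2` of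
`C([0,T], ℝ^{N−1})` (supremum norm) to the finite-dimensional space of interior grid
values is Fréchet differentiable at `0`, where `u_λ` is the solution of the perturbed
semi-discrete heat equation `∂_t u_λ + A(λ(t)) u_λ = F`, `u_λ(0) = u₀`. -/
theorem stmt11 (M N : ℕ) (hM : 3 ≤ M) (hN : 3 ≤ N) (h : ℝ) (hh : 0 < h)
    (T : ℝ) (hT : 0 < T)
    (F : ℝ → ℤ → ℤ → ℝ)
    (hF : ∀ i j, isInterior M N i j → ContinuousOn (fun t => F t i j) (Icc (0 : ℝ) T))
    (u₀ : ℤ → ℤ → ℝ) (hu₀ : ∀ i j, onBoundary M N i j → u₀ i j = 0)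
    (u : C(Icc (0 : ℝ) T, Fin (N - 1) → ℝ) → ℝ → ℤ → ℤ → ℝ)
    (hu : ∀ lam : C(Icc (0 : ℝ) T, Fin (N - 1) → ℝ), ‖lam‖ < 1 / 2 →
      (∀ t ∈ Icc (0 : ℝ) T, ∀ i j, onBoundary M N i j → u lam t i j = 0) ∧
      (∀ t, ∀ ht : t ∈ Icc (0 : ℝ) T, ∀ i j, isInterior M N i j →
        HasDerivWithinAt (fun s => u lam s i j)
          (F t i j - pertOp h (lamOfFin N (lam ⟨t, ht⟩)) (u lam t) i j)
          (Icc (0 : ℝ) T) t) ∧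
      u lam 0 = u₀) :
    DifferentiableAt ℝ
      (fun lam : C(Icc (0 : ℝ) T, Fin (N - 1) → ℝ) =>
        fun p : Fin (M - 1) × Fin (N - 1) =>
          u lam T (((p.1 : ℕ) : ℤ) + 1) (((p.2 : ℕ) : ℤ) + 1)) 0 :=
  stmt11_general M N h T hT F u₀ u hu
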